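/- arXiv:2409.14099 — 4 statements merged into one kernel-verified Lean document; each statement's English description precedes it below -/
import Mathlib

section
/- Let I be a homogeneous saturated bi-ideal of H and let k be an integer with 0 < k < 2^{n−1}. If e_{2ⁿ−1−2k} ∈ I, then e_{2ⁿ−1−k} ∈ I (where e_a for even a is interpreted via the convention e_a = e_{2i−1}^{2^p} for a = 2^p(2i−1)). -/
/-!
Let `x = e_{⟨K⟩}`. As `H` is a finite module over the PID `F₂[v]`, either `q • x ∈ I` for some
`q ≠ 0`, or some `F₂[v]`-linear functional `ℓ` vanishes on `I` with `ℓ x ≠ 0`. In the first case,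
since `x` is homogeneous and `v` has nonzero degree `1 - 2^n`, some `v^j • x` is a homogeneous
component of `q • x`, hence lies in `I`, and saturation gives `x ∈ I`. In the second case
`(id ⊗ ℓ) (Δ e_{⟨2K⟩})` lies in `I`, since `Δ e_{⟨2K⟩} ∈ I ⊗ H + H ⊗ I`. If `v^{t₀}` occurs in
`ℓ x`, the component of this element in degree `⟨K⟩ - (t₀ + 1)(2^n - 1)` is `v^{t₀+1} • x`:
all other terms of the coproduct formula have degrees `≢ ⟨K⟩` modulo `2^n - 1`, by a binary
expansion argument. Saturation again gives `x ∈ I`.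
-/

open TensorProduct

noncomputable section

/-- The base ring `F₂[v]`. -/
abbrev RR : Type := Polynomial (ZMod 2)

/-- Relations presenting the connective Morava K-theory `CK(n)*(SO_m)` of the split
special orthogonal group, with `s = ⌊(m-1)/2⌋`:  `e₀ = 0`, `eᵢ = 0` for `i > s`,
`eᵢ² = e_{2i}` for `i ≥ 1`, and `v·eᵢ = 0` for `i ≥ 2^n` (the last family is vacuous when
`m ≤ 2^(n+1)`). -/
def relSet (n s : ℕ) : Set (MvPolynomial ℕ RR) :=
  {MvPolynomial.X 0} ∪ {q | ∃ i : ℕ, s < i ∧ q = MvPolynomial.X i} ∪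
    {q | ∃ i : ℕ, 1 ≤ i ∧ q = MvPolynomial.X i ^ 2 - MvPolynomial.X (2 * i)} ∪
    {q | ∃ i : ℕ, 2 ^ n ≤ i ∧ q = MvPolynomial.C Polynomial.X * MvPolynomial.X i}

/-- The algebra `H = CK(n)*(SO_m)` (with `s = ⌊(m-1)/2⌋`), which for `m ≤ 2^(n+1)` is
`F₂[v][e₁,e₃,…,e_{2r-1}]/(e_{2i-1}^(2^{k_i}))`. -/
def Hso (n s : ℕ) : Type := MvPolynomial ℕ RR ⧸ Ideal.span (relSet n s)

instance (n s : ℕ) : CommRing (Hso n s) := Ideal.Quotient.commRing _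
instance (n s : ℕ) : Algebra RR (Hso n s) := Ideal.Quotient.algebra _
instance (n s : ℕ) : Algebra (ZMod 2) (Hso n s) := Ideal.Quotient.algebra _

/-- The element `e_a ∈ H`; for `a = 2^p·(2i-1)` it equals `e_{2i-1}^(2^p)`, and it is `0`
when the relevant odd index exceeds the number of generators. -/
def eso (n s : ℕ) (a : ℕ) : Hso n s := Ideal.Quotient.mk _ (MvPolynomial.X a)

lemma sum_two_pow_sub_lt {i : ℕ} {T : Finset ℕ} (hT : T ⊆ Finset.range (i + 1)) :
    ∑ j ∈ T, 2 ^ (i - j) < 2 ^ (i + 1) :=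
  calc ∑ j ∈ T, 2 ^ (i - j) ≤ ∑ j ∈ Finset.range (i + 1), 2 ^ (i - j) :=
        Finset.sum_le_sum_of_subset hT
    _ = ∑ j ∈ Finset.range (i + 1), 2 ^ j := Finset.sum_range_reflect (2 ^ ·) (i + 1)
    _ < 2 ^ (i + 1) := Nat.geomSum_lt le_rfl fun _ => Finset.mem_range.mp

lemma odd_sum_two_pow_sub_insert {i : ℕ} {t : Finset ℕ} (ht : t ⊆ Finset.range i) :
    Odd (∑ j ∈ insert i t, 2 ^ (i - j)) := by
  have hi : i ∉ t := fun h => (Finset.mem_range.mp (ht h)).false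
  rw [Finset.sum_insert hi, Nat.sub_self, pow_zero]
  refine Even.one_add (Finset.even_sum _ fun j hj => ?_)
  exact (Nat.even_pow' (by have := Finset.mem_range.mp (ht hj); omega)).mpr even_two

/-- Writing `K = 2^i w`, the sum is `σ w` with `σ` odd and `0 < σ < 2^(i+1)`. -/
lemma abs_sum_div_two_pow_sub_lt {K i : ℕ} (hi : 1 ≤ i) (hdvd : 2 ^ i ∣ K) (hK : 0 < K)
    {t : Finset ℕ} (ht : t ⊆ Finset.range i) :
    0 < |((∑ j ∈ insert i t, K / 2 ^ j : ℕ) : ℤ) - K| ∧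
      |((∑ j ∈ insert i t, K / 2 ^ j : ℕ) : ℤ) - K| < K := by
  obtain ⟨w, rfl⟩ := hdvd
  have hT : insert i t ⊆ Finset.range (i + 1) :=
    Finset.insert_subset (Finset.self_mem_range_succ i)
      (ht.trans (Finset.range_subset_range.mpr (Nat.le_succ i)))
  have hdiv : ∀ j ∈ insert i t, 2 ^ i * w / 2 ^ j = 2 ^ (i - j) * w := fun j hj => by
    have hj : j ≤ i := Nat.lt_succ_iff.mp (Finset.mem_range.mp (hT hj))
    rw [← Nat.pow_sub_mul_pow 2 hj, mul_comm (2 ^ (i - j)), mul_assoc,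
      Nat.mul_div_cancel_left _ (Nat.two_pow_pos j)]
  set σ := ∑ j ∈ insert i t, 2 ^ (i - j)
  have hsum : ∑ j ∈ insert i t, 2 ^ i * w / 2 ^ j = σ * w := by
    rw [Finset.sum_congr rfl hdiv, ← Finset.sum_mul]
  have hσodd : Odd σ := odd_sum_two_pow_sub_insert ht
  have hσlt : σ < 2 ^ (i + 1) := sum_two_pow_sub_lt hT
  have h2i : Even (2 ^ i) := (Nat.even_pow' (by omega)).mpr even_two
  have hne : (σ : ℤ) ≠ 2 ^ i := by
    exact_mod_cast fun h : σ = 2 ^ i => Nat.not_even_iff_odd.mpr hσodd (h ▸ h2i)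
  have hw : (0 : ℤ) < w := by exact_mod_cast Nat.pos_of_mul_pos_left hK
  have hbound : |(σ : ℤ) - 2 ^ i| < 2 ^ i := by
    have : (σ : ℤ) < 2 * 2 ^ i := by exact_mod_cast (pow_succ' 2 i) ▸ hσlt
    have : (0 : ℤ) < σ := by exact_mod_cast hσodd.pos
    rw [abs_lt]; constructor <;> linarith
  rw [hsum, show (((σ * w : ℕ) : ℤ) - ((2 ^ i * w : ℕ) : ℤ)) = w * (σ - 2 ^ i) by push_cast; ring,
    abs_mul, abs_of_pos hw]
  push_cast
  exact ⟨mul_pos hw (abs_pos.mpr (sub_ne_zero.mpr hne)),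
    by nlinarith [mul_lt_mul_of_pos_left hbound hw]⟩

section Degrees

variable {n K : ℕ}

lemma two_mul_cast_lt_two_pow_sub_one (hK0 : 0 < K) (hK : K < 2 ^ (n - 1)) :
    2 * (K : ℤ) < 2 ^ n - 1 := by
  obtain ⟨n, rfl⟩ : ∃ n', n = n' + 1 := ⟨n - 1, by cases n <;> simp_all⟩
  have : (K : ℤ) < 2 ^ n := by exact_mod_cast hK
  rw [pow_succ]
  omega

lemma cast_two_pow_sub_one_sub {a : ℕ} (ha : (a : ℤ) < 2 ^ n - 1) :
    ((2 ^ n - 1 - a : ℕ) : ℤ) = 2 ^ n - 1 - a := by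
  have : a < 2 ^ n - 1 := by
    have : ((2 ^ n - 1 : ℕ) : ℤ) = 2 ^ n - 1 := by push_cast [Nat.one_le_two_pow]; ring
    omega
  push_cast [Nat.one_le_two_pow, this.le]
  ring

lemma not_dvd_two_pow_sub_one_sub (hK0 : 0 < K) (hK : K < 2 ^ (n - 1)) :
    ¬ (1 - 2 ^ n : ℤ) ∣ ((2 ^ n - 1 - K : ℕ) : ℤ) - ((2 ^ n - 1 - 2 * K : ℕ) : ℤ) := by
  have h2lt := two_mul_cast_lt_two_pow_sub_one hK0 hK
  rw [cast_two_pow_sub_one_sub (n := n) (a := K) (by omega),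
    cast_two_pow_sub_one_sub (by push_cast; omega),
    ← neg_sub, neg_dvd]
  intro h
  have := Int.eq_zero_of_abs_lt_dvd h (by rw [abs_lt]; constructor <;> push_cast <;> omega)
  omega

lemma not_dvd_two_pow_sub_one_sub_sum (hK0 : 0 < K) (hK : K < 2 ^ (n - 1)) {i : ℕ} (hi : 1 ≤ i)
    (hdvd : 2 ^ i ∣ K) {t : Finset ℕ} (ht : t ⊆ Finset.range i) :
    ¬ (1 - 2 ^ n : ℤ) ∣
      ((2 ^ n - 1 - K : ℕ) : ℤ) - ∑ j ∈ insert i t, ((2 ^ n - 1 - K / 2 ^ j : ℕ) : ℤ) := by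
  have hlt : (K : ℤ) < 2 ^ n - 1 := by linarith [two_mul_cast_lt_two_pow_sub_one hK0 hK]
  obtain ⟨hpos, hsmall⟩ := abs_sum_div_two_pow_sub_lt hi hdvd hK0 ht
  have hcast : ∀ j ∈ insert i t, ((2 ^ n - 1 - K / 2 ^ j : ℕ) : ℤ) = 2 ^ n - 1 - (K / 2 ^ j : ℕ) :=
    fun j _ => cast_two_pow_sub_one_sub
      (lt_of_le_of_lt (by exact_mod_cast Nat.div_le_self K (2 ^ j)) hlt)
  have hsplit : ((2 ^ n - 1 - K : ℕ) : ℤ) - ∑ j ∈ insert i t, ((2 ^ n - 1 - K / 2 ^ j : ℕ) : ℤ) =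
      (((∑ j ∈ insert i t, K / 2 ^ j : ℕ) : ℤ) - K) + ((insert i t).card - 1) * (1 - 2 ^ n) := by
    rw [Finset.sum_congr rfl hcast, Finset.sum_sub_distrib, Finset.sum_const, nsmul_eq_mul,
      cast_two_pow_sub_one_sub hlt, Nat.cast_sum]
    ring
  rw [hsplit, dvd_add_left (dvd_mul_left _ _), ← neg_sub, neg_dvd]
  exact fun h => (abs_pos.mp hpos) (Int.eq_zero_of_abs_lt_dvd h (hsmall.trans hlt))

end Degrees

section Generators

variable {n s : ℕ}

lemma mk_eq_zero_of_mem_relSet {q : MvPolynomial ℕ RR} (hq : q ∈ relSet n s) :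
    Ideal.Quotient.mk (Ideal.span (relSet n s)) q = 0 :=
  Ideal.Quotient.eq_zero_iff_mem.mpr (Ideal.subset_span hq)

lemma eso_zero : eso n s 0 = 0 :=
  mk_eq_zero_of_mem_relSet (Or.inl (Or.inl (Or.inl rfl)))

lemma eso_of_lt {i : ℕ} (h : s < i) : eso n s i = 0 :=
  mk_eq_zero_of_mem_relSet (Or.inl (Or.inl (Or.inr ⟨i, h, rfl⟩)))

lemma eso_sq {i : ℕ} (h : 1 ≤ i) : eso n s i ^ 2 = eso n s (2 * i) := by
  have := mk_eq_zero_of_mem_relSet (n := n) (s := s) (Or.inl (Or.inr ⟨i, h, rfl⟩))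
  rwa [map_sub, map_pow, sub_eq_zero] at this

lemma eso_pow_two_pow {i : ℕ} (h : 1 ≤ i) (c : ℕ) : eso n s i ^ 2 ^ c = eso n s (2 ^ c * i) := by
  induction c with
  | zero => simp
  | succ c ih =>
    rw [pow_succ, pow_mul, ih, eso_sq (Nat.mul_pos (Nat.two_pow_pos c) h)]
    ring_nf

lemma isIntegral_eso (i : ℕ) : IsIntegral RR (eso n s i) := by
  rcases Nat.eq_zero_or_pos i with rfl | hi
  · rw [eso_zero]; exact isIntegral_zero
  · refine ⟨Polynomial.X ^ 2 ^ (s + 1), Polynomial.monic_X_pow _, ?_⟩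
    rw [Polynomial.eval₂_X_pow, eso_pow_two_pow hi, eso_of_lt]
    calc s < 2 ^ (s + 1) := (Nat.lt_two_pow_self).trans (Nat.pow_lt_pow_succ one_lt_two)
      _ ≤ 2 ^ (s + 1) * i := Nat.le_mul_of_pos_right _ hi

lemma adjoin_eso_eq_top : Algebra.adjoin RR (eso n s '' Set.Iic s) = ⊤ := by
  have hX : Algebra.adjoin RR (Ideal.Quotient.mkₐ RR (Ideal.span (relSet n s)) ''
      Set.range MvPolynomial.X) = ⊤ := by
    rw [← AlgHom.map_adjoin, MvPolynomial.adjoin_range_X, Algebra.map_top, AlgHom.range_eq_top]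
    exact Ideal.Quotient.mkₐ_surjective _ _
  refine eq_top_iff.mpr (hX.ge.trans (Algebra.adjoin_le ?_))
  rintro _ ⟨_, ⟨i, rfl⟩, rfl⟩
  rcases le_or_gt i s with hi | hi
  · exact Algebra.subset_adjoin ⟨i, hi, rfl⟩
  · change eso n s i ∈ _
    rw [eso_of_lt hi]
    exact Subalgebra.zero_mem _

instance : Module.Finite RR (Hso n s) := by
  have := fg_adjoin_of_finite ((Set.finite_Iic s).image (eso n s))
    (by rintro _ ⟨i, _, rfl⟩; exact isIntegral_eso i)
  rw [adjoin_eso_eq_top] at this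
  exact ⟨by simpa using this⟩

end Generators

lemma smul_eq_sum_X_pow_smul {M : Type*} [AddCommMonoid M] [Module RR M] (q : RR) (x : M) :
    q • x = ∑ j ∈ q.support, (Polynomial.X ^ j : RR) • x := by
  have hcoeff : ∀ j ∈ q.support, q.coeff j = 1 := fun j hj => by
    have key : ∀ u : ZMod 2, u ≠ 0 → u = 1 := by decide
    exact key _ (Polynomial.mem_support_iff.mp hj)
  conv_lhs => rw [q.as_sum_support_C_mul_X_pow]
  rw [Finset.sum_smul]
  exact Finset.sum_congr rfl fun j hj => by rw [hcoeff j hj, map_one, one_mul]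

lemma mem_of_X_pow_smul_mem {A : Type*} [CommRing A] [Algebra RR A] {I : Ideal A}
    (hsat : ∀ x : A, (Polynomial.X : RR) • x ∈ I → x ∈ I) {x : A} (p : ℕ)
    (h : (Polynomial.X ^ p : RR) • x ∈ I) : x ∈ I := by
  induction p generalizing x with
  | zero => simpa using h
  | succ p ih => exact hsat _ (ih (by rwa [← mul_smul, ← pow_succ]))

section Grading

variable {A : Type*} [CommRing A] [Algebra RR A] [Algebra (ZMod 2) A]
  (ℋ : ℤ → Submodule (ZMod 2) A) {c : ℤ}

lemma X_pow_smul_mem (hv : ∀ (a : ℤ) (x : A), x ∈ ℋ a → (Polynomial.X : RR) • x ∈ ℋ (a + c))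
    {d : ℤ} {x : A} (hx : x ∈ ℋ d) (j : ℕ) : (Polynomial.X ^ j : RR) • x ∈ ℋ (d + j * c) := by
  induction j with
  | zero => simpa using hx
  | succ j ih =>
    rw [pow_succ', mul_smul, Nat.cast_succ, add_one_mul, ← add_assoc]
    exact hv _ _ ih

variable [GradedRing ℋ]

lemma proj_smul_eq_zero (hv : ∀ (a : ℤ) (x : A), x ∈ ℋ a → (Polynomial.X : RR) • x ∈ ℋ (a + c))
    {d d' : ℤ} {x : A} (hx : x ∈ ℋ d') (h : ¬ c ∣ d - d') (q : RR) (j : ℕ) :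
    GradedRing.proj ℋ (d + j * c) (q • x) = 0 := by
  rw [smul_eq_sum_X_pow_smul, map_sum]
  refine Finset.sum_eq_zero fun k _ => ?_
  refine DirectSum.decompose_of_mem_ne ℋ (X_pow_smul_mem ℋ hv hx k) fun hk => h ⟨k - j, ?_⟩
  linear_combination -hk

lemma proj_smul_of_mem_support
    (hv : ∀ (a : ℤ) (x : A), x ∈ ℋ a → (Polynomial.X : RR) • x ∈ ℋ (a + c)) (hc : c ≠ 0)
    {d : ℤ} {x : A} (hx : x ∈ ℋ d) {q : RR} {j : ℕ} (hj : j ∈ q.support) :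
    GradedRing.proj ℋ (d + j * c) (q • x) = (Polynomial.X ^ j : RR) • x := by
  rw [smul_eq_sum_X_pow_smul, map_sum, Finset.sum_eq_single_of_mem j hj]
  · exact DirectSum.decompose_of_mem_same ℋ (X_pow_smul_mem ℋ hv hx j)
  · refine fun k _ hkj => DirectSum.decompose_of_mem_ne ℋ (X_pow_smul_mem ℋ hv hx k) fun hk => ?_
    have : ((k : ℤ) - j) * c = 0 := by linear_combination hk
    exact hkj (by exact_mod_cast sub_eq_zero.mp ((mul_eq_zero.mp this).resolve_right hc))

lemma mem_of_smul_mem_of_mem_graded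
    (hv : ∀ (a : ℤ) (x : A), x ∈ ℋ a → (Polynomial.X : RR) • x ∈ ℋ (a + c)) (hc : c ≠ 0)
    {I : Ideal A} (hI : I.IsHomogeneous ℋ) (hsat : ∀ x : A, (Polynomial.X : RR) • x ∈ I → x ∈ I)
    {d : ℤ} {x : A} (hx : x ∈ ℋ d) {q : RR} (hq : q ≠ 0) (h : q • x ∈ I) : x ∈ I := by
  obtain ⟨j, hj⟩ := Polynomial.support_nonempty.mpr hq
  have := hI (d + j * c) h
  rw [← GradedRing.proj_apply, proj_smul_of_mem_support ℋ hv hc hx hj] at this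
  exact mem_of_X_pow_smul_mem hsat j this

end Grading

lemma eso_mem_graded {n s : ℕ} (ℋ : ℤ → Submodule (ZMod 2) (Hso n s)) [SetLike.GradedMonoid ℋ]
    (hodd : ∀ b : ℕ, Odd b → b ≤ s → eso n s b ∈ ℋ b) (a : ℕ) : eso n s a ∈ ℋ a := by
  induction a using Nat.strong_induction_on with
  | _ a ih =>
    rcases Nat.even_or_odd' a with ⟨b, rfl | rfl⟩
    · rcases Nat.eq_zero_or_pos b with rfl | hb
      · rw [eso_zero]; exact Submodule.zero_mem _
      · rw [← eso_sq hb, sq, Nat.cast_mul, Nat.cast_two, two_mul]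
        exact SetLike.mul_mem_graded (ih b (by omega)) (ih b (by omega))
    · rcases le_or_gt (2 * b + 1) s with h | h
      · exact hodd _ (odd_two_mul_add_one b) h
      · rw [eso_of_lt h]; exact Submodule.zero_mem _

/-- The quotient of `A ⧸ I` by its `R`-torsion is finite and torsion-free over the PID `R`, hence
free, so its elements are separated by functionals. -/
theorem exists_smul_mem_or_exists_dual_ne_zero {R A : Type*} [CommRing R] [IsDomain R]
    [IsPrincipalIdealRing R] [Ring A] [Algebra R A] [Module.Finite R A] (I : Ideal A) (x : A) :
    (∃ r : R, r ≠ 0 ∧ r • x ∈ I) ∨ ∃ ℓ : Module.Dual R A, (∀ y ∈ I, ℓ y = 0) ∧ ℓ x ≠ 0 := by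
  let N := I.restrictScalars R
  let T := Submodule.torsion R (A ⧸ N)
  let π := T.mkQ ∘ₗ N.mkQ
  by_cases hx : π x = 0
  · left
    obtain ⟨⟨r, hr⟩, hrx⟩ :=
      (Submodule.mem_torsion_iff _).mp ((Submodule.Quotient.mk_eq_zero T).mp hx)
    exact ⟨r, nonZeroDivisors.ne_zero hr, (Submodule.Quotient.mk_eq_zero N).mp hrx⟩
  · right
    obtain ⟨f, hf⟩ := Module.Projective.exists_dual_ne_zero R hx
    exact ⟨f ∘ₗ π, fun y hy => by simp [π, (Submodule.Quotient.mk_eq_zero N).mpr hy], hf⟩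

section Contraction

variable {R A : Type*} [CommRing R] [CommRing A] [Algebra R A]

lemma prod_tmul_one_add_one_tmul {ι : Type*} [DecidableEq ι] (f : ι → A) (s : Finset ι) :
    ∏ j ∈ s, (f j ⊗ₜ[R] (1 : A) + (1 : A) ⊗ₜ[R] f j) =
      ∑ t ∈ s.powerset, (∏ j ∈ t, f j) ⊗ₜ[R] ∏ j ∈ s \ t, f j := by
  rw [Finset.prod_add]
  refine Finset.sum_congr rfl fun t _ => ?_
  have hl := map_prod (Algebra.TensorProduct.includeLeft : A →ₐ[R] A ⊗[R] A) f t
  have hr := map_prod (Algebra.TensorProduct.includeRight : A →ₐ[R] A ⊗[R] A) f (s \ t)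
  simp only [Algebra.TensorProduct.includeLeft_apply, Algebra.TensorProduct.includeRight_apply]
    at hl hr
  rw [← hl, ← hr, Algebra.TensorProduct.tmul_mul_tmul, mul_one, one_mul]

lemma rid_lTensor_mem_of_mem_span (I : Ideal A) (ℓ : Module.Dual R A) (hℓ : ∀ y ∈ I, ℓ y = 0)
    {z : A ⊗[R] A}
    (hz : z ∈ Submodule.span R {w : A ⊗[R] A | ∃ a ∈ I, ∃ b : A, w = a ⊗ₜ b ∨ w = b ⊗ₜ a}) :
    TensorProduct.rid R A (ℓ.lTensor A z) ∈ I := by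
  refine (Submodule.span_le (p := (I.restrictScalars R).comap
    ((TensorProduct.rid R A).toLinearMap ∘ₗ ℓ.lTensor A))).mpr ?_ hz
  rintro _ ⟨a, ha, b, rfl | rfl⟩
  · simpa [Algebra.smul_def] using I.mul_mem_left _ ha
  · simp [hℓ a ha]

lemma rid_lTensor_tmul_mul_prod {ι : Type*} [DecidableEq ι] (ℓ : Module.Dual R A) (a : A)
    (f : ι → A) (s : Finset ι) :
    TensorProduct.rid R A (ℓ.lTensor A ((a ⊗ₜ a) * ∏ j ∈ s, (f j ⊗ₜ 1 + 1 ⊗ₜ f j))) =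
      ∑ t ∈ s.powerset, ℓ (a * ∏ j ∈ s \ t, f j) • (a * ∏ j ∈ t, f j) := by
  simp [prod_tmul_one_add_one_tmul, Finset.mul_sum, Algebra.TensorProduct.tmul_mul_tmul]

end Contraction

section Comultiplication

variable {A : Type*} [CommRing A] [Algebra RR A] [Algebra (ZMod 2) A] (n : ℕ) (e : ℕ → A)

/-- The right-hand side of the formula for `Δ(e_{⟨2k⟩})`, with `⟨t⟩ = 2^n - 1 - t`. -/
def comulFormula (k : ℕ) : A ⊗[RR] A :=
  e (2 ^ n - 1 - 2 * k) ⊗ₜ[RR] 1 + 1 ⊗ₜ[RR] e (2 ^ n - 1 - 2 * k) +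
    ∑ i ∈ Finset.range (padicValNat 2 k + 1),
      ((Polynomial.X : RR) ^ (i + 1)) •
        ((e (2 ^ n - 1 - k / 2 ^ i) ⊗ₜ[RR] e (2 ^ n - 1 - k / 2 ^ i)) *
          ∏ j ∈ Finset.range i,
            (e (2 ^ n - 1 - k / 2 ^ j) ⊗ₜ[RR] (1 : A) + (1 : A) ⊗ₜ[RR] e (2 ^ n - 1 - k / 2 ^ j)))

variable (ℋ : ℤ → Submodule (ZMod 2) A) [GradedRing ℋ] {n e} {K : ℕ}

lemma proj_smul_prod_eq_zero
    (hv : ∀ (a : ℤ) (x : A), x ∈ ℋ a → (Polynomial.X : RR) • x ∈ ℋ (a + (1 - 2 ^ n)))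
    (he : ∀ a : ℕ, e a ∈ ℋ a) (hK0 : 0 < K) (hK : K < 2 ^ (n - 1)) {i : ℕ} (hi : 1 ≤ i)
    (hdvd : 2 ^ i ∣ K) {t : Finset ℕ} (ht : t ⊆ Finset.range i) (q : RR) (j : ℕ) :
    GradedRing.proj ℋ (((2 ^ n - 1 - K : ℕ) : ℤ) + j * (1 - 2 ^ n))
      (q • (e (2 ^ n - 1 - K / 2 ^ i) * ∏ l ∈ t, e (2 ^ n - 1 - K / 2 ^ l))) = 0 := by
  rw [← Finset.prod_insert (f := fun l => e (2 ^ n - 1 - K / 2 ^ l))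
    fun h => (Finset.mem_range.mp (ht h)).false]
  exact proj_smul_eq_zero ℋ hv (SetLike.prod_mem_graded ℋ _ _ fun l _ => he _)
    (not_dvd_two_pow_sub_one_sub_sum hK0 hK hi hdvd ht) q j

/-- Only the `i = 0` term survives: the other terms have degrees not congruent to `⟨K⟩` modulo
`2^n - 1`. -/
lemma proj_rid_lTensor_comulFormula
    (hv : ∀ (a : ℤ) (x : A), x ∈ ℋ a → (Polynomial.X : RR) • x ∈ ℋ (a + (1 - 2 ^ n)))
    (he : ∀ a : ℕ, e a ∈ ℋ a) (hK0 : 0 < K) (hK : K < 2 ^ (n - 1))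
    (ℓ : Module.Dual RR A) (hℓ : ℓ (e (2 ^ n - 1 - 2 * K)) = 0)
    {t₀ : ℕ} (ht₀ : t₀ ∈ (ℓ (e (2 ^ n - 1 - K))).support) :
    GradedRing.proj ℋ (((2 ^ n - 1 - K : ℕ) : ℤ) + (t₀ + 1 : ℕ) * (1 - 2 ^ n))
        (TensorProduct.rid RR A (ℓ.lTensor A (comulFormula n e K))) =
      (Polynomial.X ^ (t₀ + 1) : RR) • e (2 ^ n - 1 - K) := by
  simp only [comulFormula, map_add, map_sum, map_smul, LinearMap.lTensor_tmul,
    TensorProduct.rid_tmul, rid_lTensor_tmul_mul_prod, hℓ, zero_smul, add_zero,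
    Finset.sum_range_succ', Finset.range_zero, Finset.prod_empty, mul_one, pow_zero, Nat.div_one,
    zero_add, pow_one, Finset.smul_sum, smul_smul]
  have hc : (1 - 2 ^ n : ℤ) ≠ 0 := by
    have := two_mul_cast_lt_two_pow_sub_one hK0 hK
    omega
  rw [proj_smul_eq_zero ℋ hv (he _) (by simpa using not_dvd_two_pow_sub_one_sub hK0 hK),
    Finset.sum_eq_zero fun i hi => Finset.sum_eq_zero fun t ht => proj_smul_prod_eq_zero ℋ hv he
      hK0 hK (Nat.le_add_left 1 i) ((pow_dvd_pow 2 (Finset.mem_range.mp hi)).trans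
        pow_padicValNat_dvd) (Finset.mem_powerset.mp ht) _ _,
    zero_add, zero_add]
  refine proj_smul_of_mem_support ℋ hv hc (he _) ?_
  rwa [Polynomial.mem_support_iff, Polynomial.coeff_X_mul, ← Polynomial.mem_support_iff]

end Comultiplication

theorem stmt3_general (n m : ℕ)
    (ℋ : ℤ → Submodule (ZMod 2) (Hso n ((m - 1) / 2))) [DirectSum.Decomposition ℋ]
    (hone : (1 : Hso n ((m - 1) / 2)) ∈ ℋ 0)
    (hmul : ∀ (a b : ℤ) (x y : Hso n ((m - 1) / 2)),
      x ∈ ℋ a → y ∈ ℋ b → x * y ∈ ℋ (a + b))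
    (hv : ∀ (a : ℤ) (x : Hso n ((m - 1) / 2)), x ∈ ℋ a →
      (Polynomial.X : RR) • x ∈ ℋ (a + (1 - 2 ^ n)))
    (hedeg : ∀ i : ℕ, 1 ≤ i → i ≤ (m + 1) / 4 →
      eso n ((m - 1) / 2) (2 * i - 1) ∈ ℋ ((2 * i : ℤ) - 1))
    (Δ : Hso n ((m - 1) / 2) →ₐ[RR] Hso n ((m - 1) / 2) ⊗[RR] Hso n ((m - 1) / 2))
    (hΔ : ∀ k : ℕ, 0 < k → 2 * k < 2 ^ n →
      Δ (eso n ((m - 1) / 2) (2 ^ n - 1 - 2 * k)) =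
        eso n ((m - 1) / 2) (2 ^ n - 1 - 2 * k) ⊗ₜ[RR] 1 +
          1 ⊗ₜ[RR] eso n ((m - 1) / 2) (2 ^ n - 1 - 2 * k) +
          ∑ i ∈ Finset.range (padicValNat 2 k + 1),
            ((Polynomial.X : RR) ^ (i + 1)) •
              ((eso n ((m - 1) / 2) (2 ^ n - 1 - k / 2 ^ i) ⊗ₜ[RR]
                  eso n ((m - 1) / 2) (2 ^ n - 1 - k / 2 ^ i)) *
                ∏ j ∈ Finset.range i,
                  (eso n ((m - 1) / 2) (2 ^ n - 1 - k / 2 ^ j) ⊗ₜ[RR]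
                      (1 : Hso n ((m - 1) / 2)) +
                    (1 : Hso n ((m - 1) / 2)) ⊗ₜ[RR]
                      eso n ((m - 1) / 2) (2 ^ n - 1 - k / 2 ^ j))))
    (I : Ideal (Hso n ((m - 1) / 2)))
    (hIhom : ∀ x ∈ I, ∀ d : ℤ, ((DirectSum.decompose ℋ x) d : Hso n ((m - 1) / 2)) ∈ I)
    (hIsat : ∀ x : Hso n ((m - 1) / 2), (Polynomial.X : RR) • x ∈ I → x ∈ I)
    (hIΔ : ∀ x ∈ I, Δ x ∈ Submodule.span RR
      {z : Hso n ((m - 1) / 2) ⊗[RR] Hso n ((m - 1) / 2) |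
        ∃ a ∈ I, ∃ b : Hso n ((m - 1) / 2), z = a ⊗ₜ[RR] b ∨ z = b ⊗ₜ[RR] a})
    (K : ℕ) (hK0 : 0 < K) (hK : K < 2 ^ (n - 1))
    (hin : eso n ((m - 1) / 2) (2 ^ n - 1 - 2 * K) ∈ I) :
    eso n ((m - 1) / 2) (2 ^ n - 1 - K) ∈ I := by
  let _ : GradedRing ℋ := { one_mem := hone, mul_mem := fun _ _ _ _ => hmul _ _ _ _ }
  have hI : I.IsHomogeneous ℋ := fun d x hx => hIhom x hx d
  have he : ∀ a : ℕ, eso n ((m - 1) / 2) a ∈ ℋ a := eso_mem_graded ℋ fun b ⟨i, hb⟩ hbs => by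
    convert hedeg (i + 1) (by omega) (by omega) using 2 <;> push_cast <;> omega
  have h2K := two_mul_cast_lt_two_pow_sub_one hK0 hK
  rcases exists_smul_mem_or_exists_dual_ne_zero (R := RR) I (eso n ((m - 1) / 2) (2 ^ n - 1 - K))
    with ⟨r, hr, hrx⟩ | ⟨ℓ, hℓI, hℓ⟩
  · exact mem_of_smul_mem_of_mem_graded ℋ hv (by omega) hI hIsat (he _) hr hrx
  obtain ⟨t₀, ht₀⟩ := Polynomial.support_nonempty.mpr hℓ
  have hcontr := rid_lTensor_mem_of_mem_span I ℓ hℓI (hIΔ _ hin)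
  rw [show Δ _ = comulFormula n (eso n ((m - 1) / 2)) K from
    hΔ K hK0 (by exact_mod_cast (by omega : (2 * K : ℤ) < 2 ^ n))] at hcontr
  have hproj := hI (((2 ^ n - 1 - K : ℕ) : ℤ) + (t₀ + 1 : ℕ) * (1 - 2 ^ n)) hcontr
  rw [← GradedRing.proj_apply, proj_rid_lTensor_comulFormula ℋ hv he hK0 hK ℓ (hℓI _ hin) ht₀]
    at hproj
  exact mem_of_X_pow_smul_mem hIsat _ hproj

/-- **Restrictions on the `J`-invariant** (Proposition `restrictions2`, Appendix A3).
Fix `n ≥ 1` and `3 ≤ m ≤ 2^(n+1)`; let `H = CK(n)*(SO_m)` be the graded `F₂[v]`-bialgebra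
described above, let `I` be a homogeneous saturated bi-ideal of `H`, and let `K` be an
integer with `0 < K < 2^(n-1)`.  If `e_{2^n - 1 - 2K} ∈ I` then `e_{2^n - 1 - K} ∈ I`. -/
theorem stmt3 (n m : ℕ) (hn : 1 ≤ n) (hm3 : 3 ≤ m) (hm : m ≤ 2 ^ (n + 1))
    (ℋ : ℤ → Submodule (ZMod 2) (Hso n ((m - 1) / 2))) [DirectSum.Decomposition ℋ]
    (hone : (1 : Hso n ((m - 1) / 2)) ∈ ℋ 0)
    (hmul : ∀ (a b : ℤ) (x y : Hso n ((m - 1) / 2)),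
      x ∈ ℋ a → y ∈ ℋ b → x * y ∈ ℋ (a + b))
    (hv : ∀ (a : ℤ) (x : Hso n ((m - 1) / 2)), x ∈ ℋ a →
      (Polynomial.X : RR) • x ∈ ℋ (a + (1 - 2 ^ n)))
    (hedeg : ∀ i : ℕ, 1 ≤ i → i ≤ (m + 1) / 4 →
      eso n ((m - 1) / 2) (2 * i - 1) ∈ ℋ ((2 * i : ℤ) - 1))
    (Δ : Hso n ((m - 1) / 2) →ₐ[RR] Hso n ((m - 1) / 2) ⊗[RR] Hso n ((m - 1) / 2))
    (ε : Hso n ((m - 1) / 2) →ₐ[RR] RR)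
    (hcoassoc : ∀ x : Hso n ((m - 1) / 2),
      (TensorProduct.assoc RR (Hso n ((m - 1) / 2)) (Hso n ((m - 1) / 2))
            (Hso n ((m - 1) / 2)))
          ((TensorProduct.map Δ.toLinearMap
            (LinearMap.id : Hso n ((m - 1) / 2) →ₗ[RR] Hso n ((m - 1) / 2))) (Δ x)) =
        (TensorProduct.map
          (LinearMap.id : Hso n ((m - 1) / 2) →ₗ[RR] Hso n ((m - 1) / 2))
          Δ.toLinearMap) (Δ x))
    (hcounitl : ∀ x : Hso n ((m - 1) / 2),
      (TensorProduct.lid RR (Hso n ((m - 1) / 2)))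
        ((TensorProduct.map ε.toLinearMap
          (LinearMap.id : Hso n ((m - 1) / 2) →ₗ[RR] Hso n ((m - 1) / 2))) (Δ x)) = x)
    (hcounitr : ∀ x : Hso n ((m - 1) / 2),
      (TensorProduct.rid RR (Hso n ((m - 1) / 2)))
        ((TensorProduct.map
          (LinearMap.id : Hso n ((m - 1) / 2) →ₗ[RR] Hso n ((m - 1) / 2))
          ε.toLinearMap) (Δ x)) = x)
    (hεe : ∀ i : ℕ, 1 ≤ i → ε (eso n ((m - 1) / 2) i) = 0)
    (hΔtop : Δ (eso n ((m - 1) / 2) (2 ^ n - 1)) =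
      eso n ((m - 1) / 2) (2 ^ n - 1) ⊗ₜ[RR] 1 + 1 ⊗ₜ[RR] eso n ((m - 1) / 2) (2 ^ n - 1) +
        (Polynomial.X : RR) •
          (eso n ((m - 1) / 2) (2 ^ n - 1) ⊗ₜ[RR] eso n ((m - 1) / 2) (2 ^ n - 1)))
    (hΔ : ∀ k : ℕ, 0 < k → 2 * k < 2 ^ n →
      Δ (eso n ((m - 1) / 2) (2 ^ n - 1 - 2 * k)) =
        eso n ((m - 1) / 2) (2 ^ n - 1 - 2 * k) ⊗ₜ[RR] 1 +
          1 ⊗ₜ[RR] eso n ((m - 1) / 2) (2 ^ n - 1 - 2 * k) +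
          ∑ i ∈ Finset.range (padicValNat 2 k + 1),
            ((Polynomial.X : RR) ^ (i + 1)) •
              ((eso n ((m - 1) / 2) (2 ^ n - 1 - k / 2 ^ i) ⊗ₜ[RR]
                  eso n ((m - 1) / 2) (2 ^ n - 1 - k / 2 ^ i)) *
                ∏ j ∈ Finset.range i,
                  (eso n ((m - 1) / 2) (2 ^ n - 1 - k / 2 ^ j) ⊗ₜ[RR]
                      (1 : Hso n ((m - 1) / 2)) +
                    (1 : Hso n ((m - 1) / 2)) ⊗ₜ[RR]
                      eso n ((m - 1) / 2) (2 ^ n - 1 - k / 2 ^ j))))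
    (I : Ideal (Hso n ((m - 1) / 2)))
    (hIhom : ∀ x ∈ I, ∀ d : ℤ, ((DirectSum.decompose ℋ x) d : Hso n ((m - 1) / 2)) ∈ I)
    (hIsat : ∀ x : Hso n ((m - 1) / 2), (Polynomial.X : RR) • x ∈ I → x ∈ I)
    (hIΔ : ∀ x ∈ I, Δ x ∈ Submodule.span RR
      {z : Hso n ((m - 1) / 2) ⊗[RR] Hso n ((m - 1) / 2) |
        ∃ a ∈ I, ∃ b : Hso n ((m - 1) / 2), z = a ⊗ₜ[RR] b ∨ z = b ⊗ₜ[RR] a})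
    (hIε : ∀ x ∈ I, ε x = 0)
    (K : ℕ) (hK0 : 0 < K) (hK : K < 2 ^ (n - 1))
    (hin : eso n ((m - 1) / 2) (2 ^ n - 1 - 2 * K) ∈ I) :
    eso n ((m - 1) / 2) (2 ^ n - 1 - K) ∈ I :=
  stmt3_general n m ℋ hone hmul hv hedeg Δ hΔ I hIhom hIsat hIΔ K hK0 hK hin

end
end

section
/- The only idempotent elements of A are 0, 1, v^{−1}·α_{2ⁿ−1}, and 1 + v^{−1}·α_{2ⁿ−1}, where α_{2ⁿ−1} is the basis element corresponding to the index i = 2^{n−1}. -/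
open scoped Classical

noncomputable section

/-- The base ring `F₂[v, v⁻¹]` of Laurent polynomials over `F₂`. -/
abbrev LL : Type := LaurentPolynomial (ZMod 2)

/-- `k_i = ⌊log₂((2^(n+1) - 2)/(2i - 1))⌋` (the index `i : Fin (2^(n-1))` corresponds
to `i + 1 ∈ {1, …, 2^(n-1)}`). -/
abbrev kfun (n : ℕ) (i : Fin (2 ^ (n - 1))) : ℕ :=
  Nat.log 2 ((2 ^ (n + 1) - 2) / (2 * (i : ℕ) + 1))

/-- Exponent tuples indexing the basis of `K(n)*(SO_{2^(n+1)-1})^∨`. -/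
abbrev MIdx (n : ℕ) : Type := {t : Fin (2 ^ (n - 1)) → ℕ // ∀ i, t i < 2 ^ kfun n i}

/-- The zero tuple (indexing the unit of the algebra). -/
def zeroIdx (n : ℕ) : MIdx n := ⟨fun _ => 0, fun _ => pow_pos (by norm_num) _⟩

/-- The tuple with a `1` in position `l₀` and `0` elsewhere: it indexes the basis element
`α_{2l₀+1}`. -/
def oneIdx (n : ℕ) (hk : ∀ i, 1 ≤ kfun n i) (l₀ : Fin (2 ^ (n - 1))) : MIdx n :=
  ⟨fun i => if i = l₀ then 1 else 0, by
    intro i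
    have h2 : 1 < 2 ^ kfun n i := Nat.one_lt_two_pow_iff.mpr (by have := hk i; omega)
    dsimp only
    split
    · exact h2
    · exact lt_trans Nat.zero_lt_one h2⟩

/-- Given a tuple `t`, the tuple `u` with `u_{j(i)} = 1` for every `i` with `t_i ≠ 0` and
all other entries `0`. -/
def uIdx (n : ℕ) (hk : ∀ i, 1 ≤ kfun n i)
    (jf : Fin (2 ^ (n - 1)) → Fin (2 ^ (n - 1))) (t : MIdx n) : MIdx n :=
  ⟨fun l => if ∃ i, t.1 i ≠ 0 ∧ jf i = l then 1 else 0, by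
    intro l
    have h2 : 1 < 2 ^ kfun n l := Nat.one_lt_two_pow_iff.mpr (by have := hk l; omega)
    dsimp only
    split
    · exact h2
    · exact lt_trans Nat.zero_lt_one h2⟩

/-- The index `i = 2^(n-1)` (in `Fin` numbering, `2^(n-1) - 1`), corresponding to the
basis element `α_{2^n - 1}`. -/
def lastIdx (n : ℕ) : Fin (2 ^ (n - 1)) :=
  ⟨2 ^ (n - 1) - 1, Nat.sub_lt (pow_pos (by norm_num) _) Nat.zero_lt_one⟩

/-! Squaring is additive in characteristic `2`, so `e² = e` says that the coefficient of `e` at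
`u(w)` is `v^|w|` times the square of its coefficient at `w`; in particular every nonzero
coefficient sits at some `u(w)` with `w` admissible and again carrying a nonzero coefficient.
Such `w` are `0/1`-tuples supported on indices with `k_i = 1`, and for those the defining relation
of `j` reads `2^(n-1) - j(i) = 2 (2^(n-1) - i)`. Walking backwards the distance to the last index
halves, so by descent only `γ_0 = 1` and `α_{2^n-1}` can occur, and their coefficients solve
`c = c²` and `c = v c²` in the domain `F₂[v, v⁻¹]`. -/

open LaurentPolynomial

section SquaresOfBasis

variable {ι R A : Type*} [CommRing R] [CommRing A] [CharP A 2] [Algebra R A]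
  (b : Module.Basis ι R A) {P : ι → Prop} {σ : ι → ι} {a : ι → R}

theorem Module.Basis.repr_sq_apply (hsq : ∀ w, P w → b w ^ 2 = a w • b (σ w))
    (hsq0 : ∀ w, ¬ P w → b w ^ 2 = 0) (e : A) (z : ι) :
    b.repr (e ^ 2) z = ∑ w ∈ (b.repr e).support,
      if P w ∧ σ w = z then a w * b.repr e w ^ 2 else 0 := by
  have hfrob : e ^ 2 = ∑ w ∈ (b.repr e).support, b.repr e w ^ 2 • b w ^ 2 := by
    conv_lhs => rw [← b.linearCombination_repr e]
    simp only [Finsupp.linearCombination_apply, Finsupp.sum, CharTwo.sum_sq, smul_pow]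
  rw [hfrob, map_sum, Finsupp.finsetSum_apply]
  refine Finset.sum_congr rfl fun w _ => ?_
  by_cases hw : P w
  · rw [hsq w hw, smul_smul, map_smul, b.repr_self, Finsupp.smul_apply, Finsupp.single_apply]
    by_cases hz : σ w = z <;> simp [hw, hz, mul_comm]
  · simp [hsq0 w hw, hw]

theorem Module.Basis.repr_sq_apply_of_injOn (hsq : ∀ w, P w → b w ^ 2 = a w • b (σ w))
    (hsq0 : ∀ w, ¬ P w → b w ^ 2 = 0) (hσ : Set.InjOn σ {w | P w}) (e : A) {w : ι}
    (hw : P w) : b.repr (e ^ 2) (σ w) = a w * b.repr e w ^ 2 := by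
  rw [b.repr_sq_apply hsq hsq0, Finset.sum_eq_single w]
  · simp [hw]
  · rintro w' - hne
    exact if_neg fun h => hne (hσ h.1 hw h.2)
  · intro hw0
    simp [Finsupp.notMem_support_iff.mp hw0]

theorem Module.Basis.exists_of_repr_sq_apply_ne_zero
    (hsq : ∀ w, P w → b w ^ 2 = a w • b (σ w)) (hsq0 : ∀ w, ¬ P w → b w ^ 2 = 0)
    {e : A} {z : ι} (h : b.repr (e ^ 2) z ≠ 0) : ∃ w, P w ∧ σ w = z ∧ b.repr e w ≠ 0 := by
  rw [b.repr_sq_apply hsq hsq0] at h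
  obtain ⟨w, -, hw⟩ := Finset.exists_ne_zero_of_sum_ne_zero h
  by_cases hPw : P w ∧ σ w = z
  · rw [if_pos hPw] at hw
    exact ⟨w, hPw.1, hPw.2, fun h0 => hw (by simp [h0])⟩
  · exact absurd (if_neg hPw) hw

end SquaresOfBasis

theorem Module.Basis.eq_repr_smul_add_repr_smul {ι R M : Type*} [Semiring R]
    [AddCommMonoid M] [Module R M] (b : Module.Basis ι R M) {x : M} {i j : ι} (hij : i ≠ j)
    (h : ∀ k, b.repr x k ≠ 0 → k = i ∨ k = j) : x = b.repr x i • b i + b.repr x j • b j := by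
  conv_lhs => rw [← b.linearCombination_repr x]
  rw [Finsupp.linearCombination_apply, Finsupp.sum_of_support_subset (s := {i, j}) _
    (fun k hk => by simpa using h k (Finsupp.mem_support_iff.mp hk)) _ (by simp),
    Finset.sum_pair hij]

theorem eq_zero_or_eq_of_eq_mul_sq {R : Type*} [CommRing R] [NoZeroDivisors R] {a a' c : R}
    (ha : a * a' = 1) (h : c = a * c ^ 2) : c = 0 ∨ c = a' := by
  have hc : c * (a * c - 1) = 0 := by linear_combination -h
  refine (mul_eq_zero.mp hc).imp id fun h1 => ?_
  linear_combination a' * h1 - c * ha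

theorem sq_smul_eq_smul_of_sq_eq_smul {R A : Type*} [CommRing R] [Semiring A] [Algebra R A]
    {x : A} {u u' : R} (hu : u * u' = 1) (hx : x ^ 2 = u • x) : (u' • x) ^ 2 = u' • x := by
  rw [smul_pow, hx, smul_smul]
  congr 1
  linear_combination u' * hu

theorem two_eq_zero_of_algebra_LL (A : Type*) [Ring A] [Algebra LL A] : (2 : A) = 0 := by
  have h2 : (2 : LL) = 0 := by
    rw [← map_ofNat (algebraMap (ZMod 2) LL) 2, show (2 : ZMod 2) = 0 from rfl, map_zero]
  rw [← map_ofNat (algebraMap LL A) 2, h2, map_zero]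

section Indices

variable {n : ℕ} (hk : ∀ i, 1 ≤ kfun n i)

def IsAdmissible (t : MIdx n) : Prop := ∀ i, t.1 i = 0 ∨ t.1 i = 2 ^ (kfun n i - 1)

theorem isAdmissible_zeroIdx : IsAdmissible (zeroIdx n) := fun _ => Or.inl rfl

theorem isAdmissible_oneIdx {l : Fin (2 ^ (n - 1))}
    (hl : kfun n l = 1) : IsAdmissible (oneIdx n hk l) := by
  intro i
  by_cases hi : i = l <;> simp [oneIdx, hi, hl]

theorem kfun_eq_one_of_isAdmissible {t : MIdx n} (ht : IsAdmissible t) {i : Fin (2 ^ (n - 1))}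
    (hki : 1 ≤ kfun n i) (hi : t.1 i = 1) : kfun n i = 1 := by
  have h : 2 ^ (kfun n i - 1) = 1 := ((ht i).resolve_left (by omega)).symm.trans hi
  rw [Nat.pow_eq_one] at h
  omega

theorem zeroIdx_ne_oneIdx (l : Fin (2 ^ (n - 1))) :
    zeroIdx n ≠ oneIdx n hk l := fun h => by
  simpa [zeroIdx, oneIdx] using congrArg (fun t : MIdx n => t.1 l) h

theorem card_filter_zeroIdx : (Finset.univ.filter fun i => (zeroIdx n).1 i ≠ 0).card = 0 := by
  simp [zeroIdx]

theorem card_filter_oneIdx (l : Fin (2 ^ (n - 1))) :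
    (Finset.univ.filter fun i => (oneIdx n hk l).1 i ≠ 0).card = 1 := by
  simp [oneIdx, Finset.filter_eq']

theorem eq_zeroIdx_or_eq_oneIdx {t : MIdx n} {l : Fin (2 ^ (n - 1))}
    (h01 : ∀ i, t.1 i = 0 ∨ t.1 i = 1) (hl : ∀ i, t.1 i ≠ 0 → i = l) :
    t = zeroIdx n ∨ t = oneIdx n hk l := by
  rcases h01 l with h | h
  · left
    ext i
    by_cases hi : i = l
    · simp [zeroIdx, hi, h]
    · simpa [zeroIdx] using mt (hl i) hi
  · right
    ext i
    by_cases hi : i = l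
    · simp [oneIdx, hi, h]
    · simpa [oneIdx, hi] using mt (hl i) hi

variable {jf : Fin (2 ^ (n - 1)) → Fin (2 ^ (n - 1))}

theorem uIdx_apply_eq_zero_or_one (t : MIdx n) (l : Fin (2 ^ (n - 1))) :
    (uIdx n hk jf t).1 l = 0 ∨ (uIdx n hk jf t).1 l = 1 := by
  dsimp only [uIdx]
  split_ifs <;> simp

theorem uIdx_apply_ne_zero_iff {t : MIdx n} {l : Fin (2 ^ (n - 1))} :
    (uIdx n hk jf t).1 l ≠ 0 ↔ ∃ i, t.1 i ≠ 0 ∧ jf i = l := by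
  dsimp only [uIdx]
  split_ifs <;> simp_all

theorem uIdx_zeroIdx : uIdx n hk jf (zeroIdx n) = zeroIdx n := by
  ext l
  simp [uIdx, zeroIdx]

theorem uIdx_oneIdx {l : Fin (2 ^ (n - 1))} (hl : jf l = l) :
    uIdx n hk jf (oneIdx n hk l) = oneIdx n hk l := by
  ext i
  simp [uIdx, oneIdx, hl, eq_comm]

theorem uIdx_injOn (hjinj : Function.Injective jf) :
    Set.InjOn (uIdx n hk jf) {t | IsAdmissible t} := by
  intro w hw w' hw' h
  have hsupp : ∀ i, w.1 i ≠ 0 ↔ w'.1 i ≠ 0 := fun i => by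
    simpa [uIdx_apply_ne_zero_iff, hjinj.eq_iff, h] using Iff.symm <|
      (uIdx_apply_ne_zero_iff hk (jf := jf) (t := w) (l := jf i))
  ext i
  have := hsupp i
  rcases hw i with h1 | h1 <;> rcases hw' i with h2 | h2 <;> simp_all

end Indices

section Doubling

variable {n : ℕ} (hn : 1 ≤ n) {jf : Fin (2 ^ (n - 1)) → Fin (2 ^ (n - 1))}
  (hjf : ∀ i, 2 * ((jf i : ℕ) + 1) + 2 ^ n = (2 * (i : ℕ) + 1) * 2 ^ kfun n i + 2)
include hn

theorem kfun_lastIdx : kfun n (lastIdx n) = 1 := by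
  have h := pow_sub_one_mul (by omega : n ≠ 0) 2
  have hpos : 0 < 2 ^ (n - 1) := by positivity
  have hquot : (2 ^ (n + 1) - 2) / (2 * (2 ^ (n - 1) - 1) + 1) = 2 :=
    Nat.div_eq_of_eq_mul_left (by omega) (by rw [pow_succ]; omega)
  simpa [kfun, lastIdx, hquot] using Nat.log_pow one_lt_two 1

include hjf

theorem sub_jf_eq_two_mul_sub {i : Fin (2 ^ (n - 1))} (hi : kfun n i = 1) :
    2 ^ (n - 1) - 1 - (jf i : ℕ) = 2 * (2 ^ (n - 1) - 1 - (i : ℕ)) := by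
  have := hjf i
  have := pow_sub_one_mul (by omega : n ≠ 0) 2
  have := (jf i).isLt
  rw [hi, pow_one] at *
  omega

theorem jf_lastIdx : jf (lastIdx n) = lastIdx n := by
  have := sub_jf_eq_two_mul_sub hn hjf (kfun_lastIdx hn)
  have := (jf (lastIdx n)).isLt
  ext
  simp only [lastIdx] at *
  omega

theorem eq_zeroIdx_or_eq_oneIdx_of_subset_image (hk : ∀ i, 1 ≤ kfun n i) {S : Set (MIdx n)}
    (hS : S ⊆ uIdx n hk jf '' (S ∩ {t | IsAdmissible t})) {z : MIdx n} (hz : z ∈ S) :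
    z = zeroIdx n ∨ z = oneIdx n hk (lastIdx n) := by
  have h01 : ∀ z ∈ S, ∀ i, z.1 i = 0 ∨ z.1 i = 1 := fun z hz i => by
    obtain ⟨w, -, rfl⟩ := hS hz
    exact uIdx_apply_eq_zero_or_one hk w i
  have hdist : ∀ d, ∀ z ∈ S, ∀ j, z.1 j ≠ 0 → 2 ^ (n - 1) - 1 - (j : ℕ) = d → d = 0 := by
    intro d
    induction d using Nat.strong_induction_on with
    | _ d ih =>
      intro z hz j hj hd
      obtain ⟨w, ⟨hwS, hwA⟩, rfl⟩ := hS hz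
      obtain ⟨i, hi, rfl⟩ := (uIdx_apply_ne_zero_iff hk).mp hj
      have hki := kfun_eq_one_of_isAdmissible hwA (hk i) ((h01 w hwS i).resolve_left hi)
      have := sub_jf_eq_two_mul_sub hn hjf hki
      have := fun hlt => ih _ hlt w hwS i hi rfl
      omega
  refine eq_zeroIdx_or_eq_oneIdx hk (h01 z hz) fun j hj => Fin.ext ?_
  have := hdist _ z hz j hj rfl
  have := j.isLt
  simp only [lastIdx]
  omega

end Doubling

/-- **Idempotents of `K(n)*(SO_{2^(n+1)-1})^∨`** (Proposition `idem-answer`).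
Let `A` be the commutative `F₂[v,v⁻¹]`-algebra, free with basis `{γ_t}` indexed by the
tuples `t` with `0 ≤ t_i < 2^(k_i)` (`1 ≤ i ≤ 2^(n-1)`), with `γ_0 = 1` and squares of
basis elements given by: `γ_t² = v^|S| γ_u` when every `t_i ∈ {0, 2^(k_i - 1)}` (where
`S = {i : t_i ≠ 0}` and `u` has `u_{j(i)} = 1` for `i ∈ S`, zero elsewhere), and
`γ_t² = 0` otherwise.  Then the only idempotent elements of `A` are `0`, `1`,
`v⁻¹·α_{2^n-1}` and `1 + v⁻¹·α_{2^n-1}`. -/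
theorem stmt4 (n : ℕ) (hn : 1 ≤ n) (hk : ∀ i, 1 ≤ kfun n i)
    (jf : Fin (2 ^ (n - 1)) → Fin (2 ^ (n - 1)))
    (hjf : ∀ i, 2 * ((jf i : ℕ) + 1) + 2 ^ n = (2 * (i : ℕ) + 1) * 2 ^ kfun n i + 2)
    (hjinj : Function.Injective jf)
    (A : Type) [CommRing A] [Algebra LL A]
    (b : Module.Basis (MIdx n) LL A)
    (hone : b (zeroIdx n) = 1)
    (hsq : ∀ t : MIdx n, (∀ i, t.1 i = 0 ∨ t.1 i = 2 ^ (kfun n i - 1)) →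
      b t ^ 2 = (LaurentPolynomial.T 1 : LL) ^
          (Finset.univ.filter fun i => t.1 i ≠ 0).card • b (uIdx n hk jf t))
    (hsq0 : ∀ t : MIdx n, ¬ (∀ i, t.1 i = 0 ∨ t.1 i = 2 ^ (kfun n i - 1)) →
      b t ^ 2 = 0) :
    ∀ e : A, e ^ 2 = e ↔
      e = 0 ∨ e = 1 ∨
        e = (LaurentPolynomial.T (-1) : LL) • b (oneIdx n hk (lastIdx n)) ∨
        e = 1 + (LaurentPolynomial.T (-1) : LL) • b (oneIdx n hk (lastIdx n)) := by
  have hklast := kfun_lastIdx hn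
  have hjlast := jf_lastIdx hn hjf
  have : CharP A 2 :=
    CharTwo.of_one_ne_zero_of_two_eq_zero (hone ▸ b.ne_zero _) (two_eq_zero_of_algebra_LL A)
  have hT : (T 1 : LL) * T (-1) = 1 := by rw [← T_add, add_neg_cancel, T_zero]
  have hy : ((T (-1) : LL) • b (oneIdx n hk (lastIdx n))) ^ 2 =
      T (-1) • b (oneIdx n hk (lastIdx n)) := sq_smul_eq_smul_of_sq_eq_smul hT <| by
    simpa [card_filter_oneIdx, uIdx_oneIdx hk hjlast] using hsq _ (isAdmissible_oneIdx hk hklast)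
  intro e
  constructor
  · intro he
    have hfix : ∀ t, IsAdmissible t → uIdx n hk jf t = t → b.repr e t =
        T 1 ^ (Finset.univ.filter fun i => t.1 i ≠ 0).card * b.repr e t ^ 2 := fun t ht hu => by
      simpa [he, hu] using b.repr_sq_apply_of_injOn hsq hsq0 (uIdx_injOn hk hjinj) e ht
    have hsupp : ∀ z, b.repr e z ≠ 0 → z = zeroIdx n ∨ z = oneIdx n hk (lastIdx n) := by
      intro z hz
      refine eq_zeroIdx_or_eq_oneIdx_of_subset_image hn hjf hk
        (S := {z | b.repr e z ≠ 0}) (fun z hz => ?_) hz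
      obtain ⟨w, hwA, hwz, hw⟩ := b.exists_of_repr_sq_apply_ne_zero hsq hsq0 (he ▸ hz :)
      exact ⟨w, ⟨hw, hwA⟩, hwz⟩
    have h0 : b.repr e (zeroIdx n) = 0 ∨ b.repr e (zeroIdx n) = 1 :=
      eq_zero_or_eq_of_eq_mul_sq (mul_one 1) <| by
        simpa [card_filter_zeroIdx] using hfix _ isAdmissible_zeroIdx (uIdx_zeroIdx hk)
    have h1 : b.repr e (oneIdx n hk (lastIdx n)) = 0 ∨
        b.repr e (oneIdx n hk (lastIdx n)) = T (-1) :=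
      eq_zero_or_eq_of_eq_mul_sq hT <| by
        simpa [card_filter_oneIdx] using
          hfix _ (isAdmissible_oneIdx hk hklast) (uIdx_oneIdx hk hjlast)
    rw [b.eq_repr_smul_add_repr_smul (zeroIdx_ne_oneIdx hk _) hsupp, hone]
    rcases h0 with h0 | h0 <;> rcases h1 with h1 | h1 <;> simp [h0, h1]
  · rintro (rfl | rfl | rfl | rfl)
    · simp
    · simp
    · exact hy
    · rw [CharTwo.add_sq, one_pow, hy]

end
end

section
/- Let H be a ℤ-graded commutative F₂[v]-algebra which is finitely generated as an F₂[v]-module, and let I be a homogeneous saturated ideal of H (i.e. v·x ∈ I implies x ∈ I). Then the ideal I⊗H + H⊗I of H⊗_{F₂[v]}H (the submodule generated by all simple tensors having at least one factor in I) is saturated: for every z ∈ H⊗_{F₂[v]}H, if v·z ∈ I⊗H + H⊗I then z ∈ I⊗H + H⊗I. -/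
/-!
Because `I` is homogeneous and `v` has nonzero degree, `I` is saturated with respect to every
nonzero `f ∈ F₂[v]`, not just `v`: write `f = vᵐ g` with `g(0) ≠ 0`; if `x ∉ I`, take the extreme
degree (in the direction opposite to `v`'s) at which the component of `x` is not in `I`; there the
component of `g • x` is `g(0)` times that of `x` modulo `I`, so `g • x ∉ I`. Hence `H/I` is a
finitely generated torsion-free, so free, module over the PID `F₂[v]`, and so is `H/I ⊗ H/I`. By
right exactness of `⊗`, `I⊗H + H⊗I` is the kernel of `H ⊗ H → H/I ⊗ H/I`, so it is saturated.
-/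

open TensorProduct

namespace TensorProduct

variable {R M : Type*} [CommRing R] [AddCommGroup M] [Module R M]

theorem ker_map_mkQ_mkQ (N : Submodule R M) :
    LinearMap.ker (map N.mkQ N.mkQ) =
      Submodule.span R {w : M ⊗[R] M | ∃ x y : M, (x ∈ N ∨ y ∈ N) ∧ w = x ⊗ₜ[R] y} := by
  rw [map_ker (LinearMap.exact_subtype_mkQ N) N.mkQ_surjective (LinearMap.exact_subtype_mkQ N)
    N.mkQ_surjective, LinearMap.lTensor, LinearMap.rTensor, range_map_eq_span_tmul,
    range_map_eq_span_tmul, ← Submodule.span_union]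
  congr 1
  ext w
  simp only [Set.mem_union, Set.mem_ofPred_eq, LinearMap.id_coe, id_eq, Submodule.subtype_apply]
  constructor
  · rintro (⟨x, y, rfl⟩ | ⟨x, y, rfl⟩)
    · exact ⟨x, y, Or.inr y.2, rfl⟩
    · exact ⟨x, y, Or.inl x.2, rfl⟩
  · rintro ⟨x, y, hxy | hxy, rfl⟩
    · exact Or.inr ⟨⟨x, hxy⟩, y, rfl⟩
    · exact Or.inl ⟨x, ⟨y, hxy⟩, rfl⟩

theorem mem_span_tmul_of_smul_mem [IsDomain R] [IsPrincipalIdealRing R] (N : Submodule R M)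
    [Module.Finite R (M ⧸ N)] [Module.IsTorsionFree R (M ⧸ N)] {r : R} (hr : r ≠ 0)
    {z : M ⊗[R] M}
    (hz : r • z ∈ Submodule.span R {w : M ⊗[R] M | ∃ x y : M, (x ∈ N ∨ y ∈ N) ∧ w = x ⊗ₜ[R] y}) :
    z ∈ Submodule.span R {w : M ⊗[R] M | ∃ x y : M, (x ∈ N ∨ y ∈ N) ∧ w = x ⊗ₜ[R] y} := by
  rw [← ker_map_mkQ_mkQ, LinearMap.mem_ker] at hz ⊢
  rw [map_smul] at hz
  exact (smul_eq_zero_iff_right hr).mp hz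

end TensorProduct

theorem Finset.exists_mem_forall_sub_mul_notMem {S : Finset ℤ} (hS : S.Nonempty) {d : ℤ}
    (hd : d ≠ 0) : ∃ i ∈ S, ∀ k : ℕ, 0 < k → i - k * d ∉ S := by
  rcases hd.lt_or_gt with hneg | hpos
  · refine ⟨S.max' hS, S.max'_mem hS, fun k hk hmem => ?_⟩
    have := S.le_max' _ hmem
    have : (1 : ℤ) ≤ k := by exact_mod_cast hk
    nlinarith
  · refine ⟨S.min' hS, S.min'_mem hS, fun k hk hmem => ?_⟩
    have := S.min'_le _ hmem
    have : (1 : ℤ) ≤ k := by exact_mod_cast hk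
    nlinarith

namespace DirectSum

open Polynomial

variable {K H : Type*} [Field K] [AddCommGroup H] [Module K[X] H] [Module K H]
  [IsScalarTower K K[X] H] (ℋ : ℤ → Submodule K H) {d : ℤ}

theorem monomial_smul_mem (hshift : ∀ (i : ℤ) (x : H), x ∈ ℋ i → (X : K[X]) • x ∈ ℋ (i + d))
    {i : ℤ} {x : H} (hx : x ∈ ℋ i) (n : ℕ) (c : K) : monomial n c • x ∈ ℋ (i + n * d) := by
  have hXpow : ∀ n : ℕ, (X ^ n : K[X]) • x ∈ ℋ (i + n * d) := by
    intro n
    induction n with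
    | zero => simpa using hx
    | succ n ih =>
      rw [pow_succ', mul_smul, Nat.cast_succ, add_one_mul, ← add_assoc]
      exact hshift _ _ ih
  rw [← C_mul_X_pow_eq_monomial, mul_smul, ← algebraMap_eq, algebraMap_smul]
  exact (ℋ _).smul_mem c (hXpow n)

variable [Decomposition ℋ]

theorem decompose_monomial_smul
    (hshift : ∀ (i : ℤ) (x : H), x ∈ ℋ i → (X : K[X]) • x ∈ ℋ (i + d))
    (n : ℕ) (c : K) (x : H) (i : ℤ) :
    (decompose ℋ (monomial n c • x) i : H) = monomial n c • (decompose ℋ x (i - n * d) : H) := by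
  classical
  induction x using Decomposition.inductionOn ℋ with
  | zero => simp
  | @homogeneous j m =>
    have hm := monomial_smul_mem ℋ hshift m.2 n c
    by_cases h : j + n * d = i
    · have hm' : (m : H) ∈ ℋ (i - n * d) := by rw [← h, add_sub_cancel_right]; exact m.2
      rw [decompose_of_mem_same ℋ (h ▸ hm), decompose_of_mem_same ℋ hm']
    · rw [decompose_of_mem_ne ℋ hm h, decompose_of_mem_ne ℋ m.2 (by omega), smul_zero]
  | add a b ha hb =>
    simp only [smul_add, decompose_add, add_apply, Submodule.coe_add, ha, hb]

variable {N : Submodule K[X] H}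

theorem decompose_smul_sub_coeff_zero_smul_mem
    (hshift : ∀ (i : ℤ) (x : H), x ∈ ℋ i → (X : K[X]) • x ∈ ℋ (i + d)) {x : H} {i : ℤ}
    (hx : ∀ k : ℕ, 0 < k → (decompose ℋ x (i - k * d) : H) ∈ N) (p : K[X]) :
    (decompose ℋ (p • x) i : H) - p.coeff 0 • (decompose ℋ x i : H) ∈ N := by
  induction p using Polynomial.induction_on' with
  | add p q hp hq =>
    convert N.add_mem hp hq using 1
    simp only [add_smul, decompose_add, add_apply, Submodule.coe_add, coeff_add]
    abel
  | monomial n c =>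
    rw [decompose_monomial_smul ℋ hshift, coeff_monomial]
    rcases n.eq_zero_or_pos with rfl | hn
    · rw [if_pos rfl, Nat.cast_zero, zero_mul, sub_zero, monomial_zero_left, ← algebraMap_eq,
        algebraMap_smul, sub_self]
      exact N.zero_mem
    · rw [if_neg hn.ne', zero_smul, sub_zero]
      exact N.smul_mem _ (hx n hn)

theorem mem_of_smul_mem_of_coeff_zero_ne_zero
    (hshift : ∀ (i : ℤ) (x : H), x ∈ ℋ i → (X : K[X]) • x ∈ ℋ (i + d)) (hd : d ≠ 0)
    (hN : N.IsHomogeneous ℋ) {p : K[X]} (hp : p.coeff 0 ≠ 0) {x : H} (hpx : p • x ∈ N) :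
    x ∈ N := by
  classical
  by_contra hx
  set T := (decompose ℋ x).support.filter fun i => (decompose ℋ x i : H) ∉ N
  have hmemT : ∀ i, (decompose ℋ x i : H) ∉ N → i ∈ T := fun i hi =>
    Finset.mem_filter.mpr ⟨DFinsupp.mem_support_iff.mpr fun h0 => hi (by simp [h0]), hi⟩
  have hT : T.Nonempty := by
    contrapose! hx
    exact (hN.mem_iff ℋ).mpr fun i => by_contra fun hi => by simpa [hx] using hmemT i hi
  obtain ⟨i₀, hi₀T, hextreme⟩ := Finset.exists_mem_forall_sub_mul_notMem hT hd
  have hbelow : ∀ k : ℕ, 0 < k → (decompose ℋ x (i₀ - k * d) : H) ∈ N := fun k hk =>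
    by_contra fun hk' => hextreme k hk (hmemT _ hk')
  have hcoeff : p.coeff 0 • (decompose ℋ x i₀ : H) ∈ N := by
    simpa using N.sub_mem (hN i₀ hpx) (decompose_smul_sub_coeff_zero_smul_mem ℋ hshift hbelow p)
  exact (Finset.mem_filter.mp hi₀T).2 ((N.restrictScalars K).smul_mem_iff hp |>.mp hcoeff)

theorem isTorsionFree_quotient_of_isHomogeneous
    (hshift : ∀ (i : ℤ) (x : H), x ∈ ℋ i → (X : K[X]) • x ∈ ℋ (i + d)) (hd : d ≠ 0)
    (hN : N.IsHomogeneous ℋ) (hsat : ∀ x : H, (X : K[X]) • x ∈ N → x ∈ N) :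
    Module.IsTorsionFree K[X] (H ⧸ N) := by
  have hsat_pow : ∀ (m : ℕ) (x : H), (X ^ m : K[X]) • x ∈ N → x ∈ N := by
    intro m
    induction m with
    | zero => simp
    | succ m ih => exact fun x hx => ih x (hsat _ (by rwa [← mul_smul, ← pow_succ']))
  refine .of_smul_eq_zero fun r q hrq => or_iff_not_imp_left.mpr fun hr => ?_
  obtain ⟨y, rfl⟩ := N.mkQ_surjective q
  -- `r = X ^ m * g` with `g` prime to `X`
  obtain ⟨g, hrg, hg⟩ := exists_eq_pow_rootMultiplicity_mul_and_not_dvd r hr 0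
  rw [map_zero, sub_zero, X_dvd_iff] at hg
  rw [hrg, map_zero, sub_zero, Submodule.mkQ_apply, ← Submodule.Quotient.mk_smul,
    Submodule.Quotient.mk_eq_zero, mul_smul] at hrq
  rw [Submodule.mkQ_apply, Submodule.Quotient.mk_eq_zero]
  exact mem_of_smul_mem_of_coeff_zero_ne_zero ℋ hshift hd hN hg (hsat_pow _ _ hrq)

end DirectSum

theorem stmt8_general (d : ℤ) (hd : d ≠ 0)
    (H : Type*) [CommRing H] [Algebra (Polynomial (ZMod 2)) H]
    [Module (ZMod 2) H] [IsScalarTower (ZMod 2) (Polynomial (ZMod 2)) H]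
    [Module.Finite (Polynomial (ZMod 2)) H]
    (ℋ : ℤ → Submodule (ZMod 2) H) [DirectSum.Decomposition ℋ]
    (hshift : ∀ (i : ℤ) (x : H), x ∈ ℋ i →
      (Polynomial.X : Polynomial (ZMod 2)) • x ∈ ℋ (i + d))
    (I : Ideal H)
    (hIhom : ∀ x ∈ I, ∀ i : ℤ, ((DirectSum.decompose ℋ x) i : H) ∈ I)
    (hIsat : ∀ x : H, (Polynomial.X : Polynomial (ZMod 2)) • x ∈ I → x ∈ I) :
    ∀ z : H ⊗[Polynomial (ZMod 2)] H,
      (Polynomial.X : Polynomial (ZMod 2)) • z ∈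
          Submodule.span (Polynomial (ZMod 2))
            {w : H ⊗[Polynomial (ZMod 2)] H | ∃ x y : H, (x ∈ I ∨ y ∈ I) ∧ w = x ⊗ₜ[Polynomial (ZMod 2)] y} →
        z ∈ Submodule.span (Polynomial (ZMod 2))
            {w : H ⊗[Polynomial (ZMod 2)] H | ∃ x y : H, (x ∈ I ∨ y ∈ I) ∧ w = x ⊗ₜ[Polynomial (ZMod 2)] y} := by
  intro z hz
  let N : Submodule (Polynomial (ZMod 2)) H := I.restrictScalars (Polynomial (ZMod 2))
  have : Module.IsTorsionFree (Polynomial (ZMod 2)) (H ⧸ N) :=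
    DirectSum.isTorsionFree_quotient_of_isHomogeneous ℋ hshift hd
      (fun i x hx => hIhom x hx i) hIsat
  exact TensorProduct.mem_span_tmul_of_smul_mem N Polynomial.X_ne_zero hz

/-- **Saturation of `I⊗H + H⊗I`** (Lemma `sublemma` (2)).
Let `H` be a ℤ-graded commutative `F₂[v]`-algebra (grading by `F₂`-subspaces, `v` of
nonzero degree `d`), finitely generated as an `F₂[v]`-module, and let `I` be a homogeneous
saturated ideal of `H`.  Then the submodule `I⊗H + H⊗I` of `H ⊗_{F₂[v]} H` — the span of
all simple tensors having a factor in `I` — is saturated. -/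
theorem stmt8 (d : ℤ) (hd : d ≠ 0)
    (H : Type*) [CommRing H] [Algebra (Polynomial (ZMod 2)) H]
    [Module (ZMod 2) H] [IsScalarTower (ZMod 2) (Polynomial (ZMod 2)) H]
    [Module.Finite (Polynomial (ZMod 2)) H]
    (ℋ : ℤ → Submodule (ZMod 2) H) [DirectSum.Decomposition ℋ]
    (hone : (1 : H) ∈ ℋ 0)
    (hmul : ∀ (i j : ℤ) (x y : H), x ∈ ℋ i → y ∈ ℋ j → x * y ∈ ℋ (i + j))
    (hshift : ∀ (i : ℤ) (x : H), x ∈ ℋ i →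
      (Polynomial.X : Polynomial (ZMod 2)) • x ∈ ℋ (i + d))
    (I : Ideal H)
    (hIhom : ∀ x ∈ I, ∀ i : ℤ, ((DirectSum.decompose ℋ x) i : H) ∈ I)
    (hIsat : ∀ x : H, (Polynomial.X : Polynomial (ZMod 2)) • x ∈ I → x ∈ I) :
    ∀ z : H ⊗[Polynomial (ZMod 2)] H,
      (Polynomial.X : Polynomial (ZMod 2)) • z ∈
          Submodule.span (Polynomial (ZMod 2))
            {w : H ⊗[Polynomial (ZMod 2)] H | ∃ x y : H, (x ∈ I ∨ y ∈ I) ∧ w = x ⊗ₜ[Polynomial (ZMod 2)] y} →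
        z ∈ Submodule.span (Polynomial (ZMod 2))
            {w : H ⊗[Polynomial (ZMod 2)] H | ∃ x y : H, (x ∈ I ∨ y ∈ I) ∧ w = x ⊗ₜ[Polynomial (ZMod 2)] y} :=
  stmt8_general d hd H ℋ hshift I hIhom hIsat
end

section
/- Let n ≥ 1 and t ≥ 1 be integers, let a₁ < a₂ < … < a_t be natural numbers, and set k = 2^{a₁} + 2^{a₂} + … + 2^{a_t}; assume 2k < 2ⁿ. Then for every index i with 0 ≤ i ≤ t−1, the binomial coefficient C(2ⁿ − 1 − 2k + 2^{a₁} + … + 2^{a_i}, 2^{a_{i+1}}) is odd (for i = 0 the sum 2^{a₁}+…+2^{a_i} is empty). -/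
/-!
By Lucas' theorem, `C(m, 2^b)` is odd exactly when bit `b` of `m` is set. Write
`S = 2^(a 0) + ⋯ + 2^(a (i-1))`, so that `S < 2^(a i)` because the exponents are strictly
increasing. With `m = 2^n - 1 - 2k + S` we get `m + (S + 1) = 2^n - 2(k - S)`, and every term of
`k - S = 2^(a i) + ⋯ + 2^(a (t-1))` is divisible by `2^(a i)`; since also
`2^(a i + 1) ≤ 2k < 2^n`, we get `m ≡ -(S + 1) (mod 2^(a i + 1))` with
`1 ≤ S + 1 ≤ 2^(a i)`, which forces bit `a i` of `m` to be set.
-/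

open Finset

theorem Nat.choose_two_pow_modEq_div (m b : ℕ) : m.choose (2 ^ b) ≡ m / 2 ^ b [MOD 2] := by
  induction b generalizing m with
  | zero => simp [Nat.ModEq.refl]
  | succ b ih =>
    have hlucas := Choose.choose_modEq_choose_mod_mul_choose_div_nat (n := m) (k := 2 ^ (b + 1))
      (p := 2)
    rw [pow_succ, Nat.mul_mod_left, Nat.choose_zero_right, one_mul,
      Nat.mul_div_cancel _ two_pos] at hlucas
    rw [pow_succ', ← Nat.div_div_eq_div_mul, ← pow_succ']
    exact hlucas.trans (ih (m / 2))

theorem Nat.odd_choose_two_pow_iff (m b : ℕ) : Odd (m.choose (2 ^ b)) ↔ Odd (m / 2 ^ b) := by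
  rw [Nat.odd_iff, Nat.odd_iff, Nat.choose_two_pow_modEq_div m b]

theorem Nat.odd_div_two_pow_of_dvd_add {m r b : ℕ} (hdvd : 2 ^ (b + 1) ∣ m + r)
    (hr : 0 < r) (hrb : r ≤ 2 ^ b) : Odd (m / 2 ^ b) := by
  obtain ⟨q, hq⟩ := hdvd
  have hq0 : q ≠ 0 := by rintro rfl; omega
  obtain ⟨c, rfl⟩ := Nat.exists_eq_add_one_of_ne_zero hq0
  have hm : m = 2 ^ b * (2 * c + 1) + (2 ^ b - r) := by rw [pow_succ] at hq; grind
  refine ⟨c, ?_⟩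
  rw [hm, Nat.mul_add_div (by positivity), Nat.div_eq_of_lt (by omega), add_zero]

theorem sum_two_pow_lt_two_pow_of_lt_succ {a : ℕ → ℕ} {i : ℕ}
    (ha : ∀ j < i, a j < a (j + 1)) :
    ∑ j ∈ range i, 2 ^ a j < 2 ^ a i := by
  induction i with
  | zero => simp
  | succ i ih =>
    calc ∑ j ∈ range (i + 1), 2 ^ a j
        = ∑ j ∈ range i, 2 ^ a j + 2 ^ a i := sum_range_succ _ _
      _ < 2 ^ (a i + 1) := by
        rw [pow_succ]; linarith [ih fun j hj ↦ ha j (by omega)]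
      _ ≤ 2 ^ a (i + 1) := Nat.pow_le_pow_right two_pos (ha i (by omega))

theorem stmt12_general (n t : ℕ)
    (a : ℕ → ℕ) (hmono : ∀ i j : ℕ, i < j → j < t → a i < a j)
    (k : ℕ) (hk : k = ∑ i ∈ Finset.range t, 2 ^ a i)
    (h2k : 2 * k < 2 ^ n) :
    ∀ i < t, Odd (Nat.choose (2 ^ n - 1 - 2 * k + ∑ j ∈ Finset.range i, 2 ^ a j)
      (2 ^ a i)) := by
  intro i hi
  set S := ∑ j ∈ range i, 2 ^ a j
  set tail := ∑ j ∈ Ico i t, 2 ^ a j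
  have hS : S < 2 ^ a i :=
    sum_two_pow_lt_two_pow_of_lt_succ fun j hj ↦ hmono j (j + 1) (by omega) (by omega)
  have hsplit : k = S + tail := hk ▸ (sum_range_add_sum_Ico _ hi.le).symm
  have htail : 2 ^ a i ∣ tail := dvd_sum fun j hj ↦ by
    obtain ⟨hij, hjt⟩ := mem_Ico.mp hj
    exact pow_dvd_pow 2 (hij.eq_or_lt.elim (fun h ↦ h ▸ le_rfl) fun h ↦ (hmono i j h hjt).le)
  have hai : 2 ^ (a i + 1) ≤ 2 * k := by
    rw [pow_succ, mul_comm]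
    exact Nat.mul_le_mul_left 2
      (hk ▸ single_le_sum (f := fun j ↦ 2 ^ a j) (fun _ _ ↦ Nat.zero_le _) (mem_range.mpr hi))
  have hn : 2 ^ (a i + 1) ∣ 2 ^ n :=
    pow_dvd_pow 2 ((Nat.pow_lt_pow_iff_right one_lt_two).mp (hai.trans_lt h2k)).le
  rw [Nat.odd_choose_two_pow_iff]
  refine Nat.odd_div_two_pow_of_dvd_add (r := S + 1) ?_ (Nat.succ_pos S) hS
  have hsum : 2 ^ n - 1 - 2 * k + S + (S + 1) = 2 ^ n - 2 * tail := by omega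
  rw [hsum]
  exact Nat.dvd_sub hn (by rw [pow_succ, mul_comm]; exact mul_dvd_mul_left 2 htail)

/-- **Odd binomial coefficients** (Appendix A3).
Let `n ≥ 1`, `t ≥ 1`, let `a 0 < a 1 < ⋯ < a (t-1)` be natural numbers and set
`k = 2^(a 0) + ⋯ + 2^(a (t-1))`; assume `2k < 2^n`.  Then for every `i < t` the binomial
coefficient `C(2^n - 1 - 2k + 2^(a 0) + ⋯ + 2^(a (i-1)), 2^(a i))` is odd. -/
theorem stmt12 (n t : ℕ) (hn : 1 ≤ n) (ht : 1 ≤ t)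
    (a : ℕ → ℕ) (hmono : ∀ i j : ℕ, i < j → j < t → a i < a j)
    (k : ℕ) (hk : k = ∑ i ∈ Finset.range t, 2 ^ a i)
    (h2k : 2 * k < 2 ^ n) :
    ∀ i < t, Odd (Nat.choose (2 ^ n - 1 - 2 * k + ∑ j ∈ Finset.range i, 2 ^ a j)
      (2 ^ a i)) :=
  stmt12_general n t a hmono k hk h2k
end
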